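/- Let I be a small category with strict duality σ : Iᵒᵖ ⥤ I and let C be any category. Equip Fun(I, Hyp(C)) with the strict duality D(F) := S ∘ Fᵒᵖ ∘ σᵒᵖ, where S : Hyp(C)ᵒᵖ ⥤ Hyp(C) is the swap duality of Hyp(C) := C × Cᵒᵖ, and equip Hyp(Fun(I,C)) = Fun(I,C) × Fun(I,C)ᵒᵖ with its swap duality. Then the functor Φ sending F : I ⥤ C × Cᵒᵖ to the pair (pr₁ ∘ F, (pr₂ ∘ F)ᵒᵖ ∘ σᵒᵖ), the second entry regarded as an object of Fun(I,C)ᵒᵖ, is an isomorphism of categories which commutes strictly with the two dualities. -/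

import Mathlib

/-!
All three equations hold definitionally once the second component is reindexed along
`σ.rightOp ⋙ σ`: both composites of `hypCompare σ C` with the evident inverse are such a
reindexing, and the two ways around the duality square differ by one. Rewriting with
`σ.rightOp ⋙ σ = 𝟭 I` then gives the equalities of functors on the nose, with no `eqToHom`
transport.
-/

open CategoryTheory Opposite

universe v₁ u₁ v₂ u₂

/-- The swap duality on the hyperbolic category `Hyp C = C × Cᵒᵖ`, sending `(X, Y)` to
`(Y, X)` and `(f, g)` to `(g, f)`. -/
def hypSwap (C : Type u₂) [Category.{v₂} C] : (C × Cᵒᵖ)ᵒᵖ ⥤ C × Cᵒᵖ where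
  obj Z := (Z.unop.2.unop, op Z.unop.1)
  map φ := (φ.unop.2.unop, φ.unop.1.op)

variable {I : Type u₁} [Category.{v₁} I] (σ : Iᵒᵖ ⥤ I)
variable (C : Type u₂) [Category.{v₂} C]

/-- The strict duality `F ↦ S ∘ Fᵒᵖ ∘ σᵒᵖ` on the functor category `Fun(I, Hyp C)`,
induced by a strict duality `σ` on `I` and the swap duality `S` on `Hyp C = C × Cᵒᵖ`. -/
def funDuality : (I ⥤ C × Cᵒᵖ)ᵒᵖ ⥤ (I ⥤ C × Cᵒᵖ) where
  obj F := σ.rightOp ⋙ F.unop.op ⋙ hypSwap C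
  map {F G} η := Functor.whiskerLeft σ.rightOp (Functor.whiskerRight (NatTrans.op η.unop) (hypSwap C))

/-- The comparison functor `Φ : Fun(I, Hyp C) ⥤ Hyp (Fun(I, C))`, sending
`F : I ⥤ C × Cᵒᵖ` to the pair `(pr₁ ∘ F, (pr₂ ∘ F)ᵒᵖ ∘ σᵒᵖ)`, the second entry regarded
as an object of `Fun(I, C)ᵒᵖ`. -/
def hypCompare : (I ⥤ C × Cᵒᵖ) ⥤ (I ⥤ C) × (I ⥤ C)ᵒᵖ where
  obj F := (F ⋙ CategoryTheory.Prod.fst C Cᵒᵖ,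
    op (σ.rightOp ⋙ (F ⋙ CategoryTheory.Prod.snd C Cᵒᵖ).leftOp))
  map {F G} η := (Functor.whiskerRight η (CategoryTheory.Prod.fst C Cᵒᵖ),
    (Functor.whiskerLeft σ.rightOp
      (NatTrans.leftOp (Functor.whiskerRight η (CategoryTheory.Prod.snd C Cᵒᵖ)))).op)

section Reindex

variable (J : I ⥤ I)

def precompSnd : (I ⥤ C × Cᵒᵖ) ⥤ (I ⥤ C × Cᵒᵖ) where
  obj F := (F ⋙ CategoryTheory.Prod.fst C Cᵒᵖ).prod' (J ⋙ F ⋙ CategoryTheory.Prod.snd C Cᵒᵖ)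
  map η := NatTrans.prod' (Functor.whiskerRight η (CategoryTheory.Prod.fst C Cᵒᵖ))
    (Functor.whiskerLeft J (Functor.whiskerRight η (CategoryTheory.Prod.snd C Cᵒᵖ)))

theorem precompSnd_id : precompSnd C (𝟭 I) = 𝟭 (I ⥤ C × Cᵒᵖ) := rfl

def hypPrecompSnd : (I ⥤ C) × (I ⥤ C)ᵒᵖ ⥤ (I ⥤ C) × (I ⥤ C)ᵒᵖ where
  obj P := (P.1, op (J ⋙ P.2.unop))
  map φ := (φ.1, (Functor.whiskerLeft J φ.2.unop).op)

theorem hypPrecompSnd_id : hypPrecompSnd C (𝟭 I) = 𝟭 ((I ⥤ C) × (I ⥤ C)ᵒᵖ) := rfl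

end Reindex

def hypCompareInv : (I ⥤ C) × (I ⥤ C)ᵒᵖ ⥤ (I ⥤ C × Cᵒᵖ) where
  obj P := P.1.prod' (σ.rightOp ⋙ P.2.unop.op)
  map φ := NatTrans.prod' φ.1 (Functor.whiskerLeft σ.rightOp (NatTrans.op φ.2.unop))

theorem hypCompare_comp_hypCompareInv :
    hypCompare σ C ⋙ hypCompareInv σ C = precompSnd C (σ.rightOp ⋙ σ) := rfl

theorem hypCompareInv_comp_hypCompare :
    hypCompareInv σ C ⋙ hypCompare σ C = hypPrecompSnd C (σ.rightOp ⋙ σ) := rfl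

theorem funDuality_comp_hypCompare :
    funDuality σ C ⋙ hypCompare σ C =
      (hypCompare σ C).op ⋙ hypSwap (I ⥤ C) ⋙ hypPrecompSnd C (σ.rightOp ⋙ σ) := rfl

/-- Let `(I, σ)` be a small category with strict duality and let `C` be
any category. The functor `Φ = hypCompare σ C : Fun(I, Hyp C) ⥤ Hyp (Fun(I, C))` is an
isomorphism of categories which commutes strictly with the duality `F ↦ S ∘ Fᵒᵖ ∘ σᵒᵖ`
on `Fun(I, Hyp C)` and the swap duality on `Hyp (Fun(I, C))`. -/
theorem stmt5 (hσ : σ.rightOp ⋙ σ = 𝟭 I) :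
    ∃ Ψ : (I ⥤ C) × (I ⥤ C)ᵒᵖ ⥤ (I ⥤ C × Cᵒᵖ),
      hypCompare σ C ⋙ Ψ = 𝟭 (I ⥤ C × Cᵒᵖ) ∧
      Ψ ⋙ hypCompare σ C = 𝟭 ((I ⥤ C) × (I ⥤ C)ᵒᵖ) ∧
      funDuality σ C ⋙ hypCompare σ C = (hypCompare σ C).op ⋙ hypSwap (I ⥤ C) := by
  refine ⟨hypCompareInv σ C, ?_, ?_, ?_⟩
  · rw [hypCompare_comp_hypCompareInv, hσ, precompSnd_id]
  · rw [hypCompareInv_comp_hypCompare, hσ, hypPrecompSnd_id]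
  · rw [funDuality_comp_hypCompare, hσ, hypPrecompSnd_id, Functor.comp_id]
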